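/- arXiv:1907.04299 — 4 statements merged into one kernel-verified Lean document; each statement's English description precedes it below -/
import Mathlib

section
/- Let d > 0, h ≥ 0, T > 0 with d ≥ T/cos(θ_min) + h·tan(θ_min) for some θ_min ∈ [0, π/2). Then t*(θ_min) := d·cos(θ_min) − h·sin(θ_min) ≥ T and θ*(T) := arcsin(d/sqrt(d^2+h^2)) − arcsin(T/sqrt(d^2+h^2)) ≥ θ_min. -/
/-!
Multiplying the hypothesis by `cos θmin > 0` gives the first bound. For the second, write
`(d, h) = r (sin φ, cos φ)` with `r = √(d² + h²)` and `φ = arcsin (d / r) ∈ [0, π/2]`; then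
`d cos θ - h sin θ = r sin (φ - θ)`, so the first bound reads `T / r ≤ sin (φ - θmin)`, and
applying the monotone `arcsin` (which inverts `sin` on `[-π/2, π/2] ∋ φ - θmin`) gives
`arcsin (T / r) ≤ φ - θmin`.
-/

open Real

lemma le_mul_cos_sub_mul_sin_of_div_cos_add_mul_tan_le {d h T θ : ℝ} (hcos : 0 < cos θ)
    (hle : T / cos θ + h * tan θ ≤ d) : T ≤ d * cos θ - h * sin θ := by
  have hmul := mul_le_mul_of_nonneg_right hle hcos.le
  have hexpand : (T / cos θ + h * tan θ) * cos θ = T + h * sin θ := by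
    rw [tan_eq_sin_div_cos]
    field_simp
  linarith

lemma div_sqrt_sq_add_sq_mem_Icc (d h : ℝ) : d / √(d ^ 2 + h ^ 2) ∈ Set.Icc (-1) 1 := by
  rw [Set.mem_Icc, ← abs_le]
  rcases (sqrt_nonneg (d ^ 2 + h ^ 2)).eq_or_lt with hr | hr
  · simp [← hr]
  · rw [abs_div, abs_of_pos hr, div_le_one hr]
    exact abs_le_sqrt (le_add_of_nonneg_right (sq_nonneg h))

lemma cos_arcsin_div_sqrt_sq_add_sq {d h : ℝ} (hh : 0 ≤ h) (hr : 0 < √(d ^ 2 + h ^ 2)) :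
    cos (arcsin (d / √(d ^ 2 + h ^ 2))) = h / √(d ^ 2 + h ^ 2) := by
  have hr2 : √(d ^ 2 + h ^ 2) ^ 2 = d ^ 2 + h ^ 2 := sq_sqrt (by positivity)
  have hsq : 1 - (d / √(d ^ 2 + h ^ 2)) ^ 2 = (h / √(d ^ 2 + h ^ 2)) ^ 2 := by
    field_simp
    linarith
  rw [cos_arcsin, hsq, sqrt_sq (by positivity)]

lemma mul_cos_sub_mul_sin_eq {d h : ℝ} (hh : 0 ≤ h) (θ : ℝ) :
    d * cos θ - h * sin θ =
      √(d ^ 2 + h ^ 2) * sin (arcsin (d / √(d ^ 2 + h ^ 2)) - θ) := by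
  rcases (sqrt_nonneg (d ^ 2 + h ^ 2)).eq_or_lt with hr | hr
  · obtain ⟨rfl, rfl⟩ : d = 0 ∧ h = 0 := by
      have := (sqrt_eq_zero (by positivity)).1 hr.symm
      constructor <;> nlinarith [sq_nonneg d, sq_nonneg h]
    simp
  · obtain ⟨hlo, hhi⟩ := div_sqrt_sq_add_sq_mem_Icc d h
    rw [sin_sub, sin_arcsin hlo hhi, cos_arcsin_div_sqrt_sq_add_sq hh hr]
    field_simp

theorem far_receiver_bounds_general
    (d h T θmin : ℝ) (hd : 0 < d) (hh : 0 ≤ h)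
    (hθ1 : 0 ≤ θmin) (hθ2 : θmin < π/2)
    (hfar : d ≥ T / Real.cos θmin + h * Real.tan θmin) :
    d * Real.cos θmin - h * Real.sin θmin ≥ T ∧
    Real.arcsin (d / Real.sqrt (d^2 + h^2))
      - Real.arcsin (T / Real.sqrt (d^2 + h^2)) ≥ θmin := by
  have hcos : 0 < cos θmin := cos_pos_of_mem_Ioo ⟨by linarith [pi_pos], hθ2⟩
  have hdist := le_mul_cos_sub_mul_sin_of_div_cos_add_mul_tan_le hcos hfar
  refine ⟨hdist, ?_⟩
  set r := √(d ^ 2 + h ^ 2)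
  set φ := arcsin (d / r)
  have hr : 0 < r := sqrt_pos.2 (by positivity)
  have hφ0 : 0 ≤ φ := arcsin_nonneg.2 (by positivity)
  have hsin : T / r ≤ sin (φ - θmin) := by
    rw [div_le_iff₀ hr, mul_comm, ← mul_cos_sub_mul_sin_eq hh]
    exact hdist
  have harcsin : arcsin (T / r) ≤ φ - θmin := calc
    arcsin (T / r) ≤ arcsin (sin (φ - θmin)) := monotone_arcsin hsin
    _ = φ - θmin := arcsin_sin (by linarith) (by linarith [arcsin_le_pi_div_two (d / r)])
  linarith

theorem far_receiver_bounds
    (d h T θmin : ℝ) (hd : 0 < d) (hh : 0 ≤ h) (hT : 0 < T)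
    (hθ1 : 0 ≤ θmin) (hθ2 : θmin < π/2)
    (hTd : T < Real.sqrt (d^2 + h^2))
    (hfar : d ≥ T / Real.cos θmin + h * Real.tan θmin) :
    d * Real.cos θmin - h * Real.sin θmin ≥ T ∧
    Real.arcsin (d / Real.sqrt (d^2 + h^2))
      - Real.arcsin (T / Real.sqrt (d^2 + h^2)) ≥ θmin :=
  far_receiver_bounds_general d h T θmin hd hh hθ1 hθ2 hfar
end

section
/- Let d > 0, h ≥ 0, T > 0, θ_min ∈ [0, π/2), and suppose T·cos(θ_min) ≤ d ≤ T/cos(θ_min) + h·tan(θ_min). Then t*(θ_min) = d·cos(θ_min) − h·sin(θ_min) ≤ T and, if T < sqrt(d^2+h^2), θ*(T) = arcsin(d/sqrt(d^2+h^2)) − arcsin(T/sqrt(d^2+h^2)) ≤ θ_min. -/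
/-!
Multiplying the upper bound on `d` by `cos θmin > 0` gives `d cos θmin - h sin θmin ≤ T` at once.
For the angle, write `R = √(d² + h²)` and `α = arcsin (d / R)`, so that `cos α = h / R`; then
`d cos θ - h sin θ = R sin (α - θ)`, and the first bound reads `sin (α - θmin) ≤ T / R`,
i.e. `α - θmin ≤ arcsin (T / R)` because `α - θmin` lies in `(-π/2, π/2]`.
-/

open Real

theorem mul_cos_sub_mul_sin_le_of_le_div_cos_add_mul_tan {d h T θ : ℝ} (hcos : 0 < cos θ)
    (hd : d ≤ T / cos θ + h * tan θ) : d * cos θ - h * sin θ ≤ T := by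
  have hclear : (T / cos θ + h * tan θ) * cos θ = T + h * sin θ := by
    rw [tan_eq_sin_div_cos]; field_simp
  linarith [hclear ▸ mul_le_mul_of_nonneg_right hd hcos.le]

theorem cos_arcsin_div_sqrt_sq_add_sq_s12 {a b : ℝ} (hb : 0 ≤ b) (hR : 0 < √(a ^ 2 + b ^ 2)) :
    cos (arcsin (a / √(a ^ 2 + b ^ 2))) = b / √(a ^ 2 + b ^ 2) := by
  have hR2 : √(a ^ 2 + b ^ 2) ^ 2 = a ^ 2 + b ^ 2 := sq_sqrt (by positivity)
  rw [cos_arcsin, show 1 - (a / √(a ^ 2 + b ^ 2)) ^ 2 = (b / √(a ^ 2 + b ^ 2)) ^ 2 by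
    field_simp; linarith, sqrt_sq (by positivity)]

theorem sin_arcsin_div_sqrt_sq_add_sq (a b : ℝ) :
    sin (arcsin (a / √(a ^ 2 + b ^ 2))) = a / √(a ^ 2 + b ^ 2) := by
  rcases (sqrt_nonneg (a ^ 2 + b ^ 2)).eq_or_lt with hR | hR
  · simp [← hR]
  obtain ⟨hlo, hhi⟩ := abs_le.1 (abs_le_sqrt (by nlinarith) : |a| ≤ √(a ^ 2 + b ^ 2))
  exact sin_arcsin (by rw [le_div_iff₀ hR]; linarith) (by rw [div_le_one hR]; linarith)

theorem mul_cos_sub_mul_sin_eq_sqrt_mul_sin {a b : ℝ} (hb : 0 ≤ b) (θ : ℝ) :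
    a * cos θ - b * sin θ = √(a ^ 2 + b ^ 2) * sin (arcsin (a / √(a ^ 2 + b ^ 2)) - θ) := by
  rcases (sqrt_nonneg (a ^ 2 + b ^ 2)).eq_or_lt with hR | hR
  · obtain ⟨rfl, rfl⟩ : a = 0 ∧ b = 0 := by
      rw [eq_comm, sqrt_eq_zero (by positivity)] at hR
      constructor <;> nlinarith
    simp
  rw [sin_sub, sin_arcsin_div_sqrt_sq_add_sq, cos_arcsin_div_sqrt_sq_add_sq_s12 hb hR]
  field_simp

theorem mid_receiver_bounds_general
    (d h T θmin : ℝ) (hd : 0 < d) (hh : 0 ≤ h)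
    (hθ1 : 0 ≤ θmin) (hθ2 : θmin < π/2)
    (hhigh : d ≤ T / Real.cos θmin + h * Real.tan θmin) :
    d * Real.cos θmin - h * Real.sin θmin ≤ T ∧
    (T < Real.sqrt (d^2 + h^2) →
      Real.arcsin (d / Real.sqrt (d^2 + h^2))
        - Real.arcsin (T / Real.sqrt (d^2 + h^2)) ≤ θmin) := by
  have hcos : 0 < cos θmin := cos_pos_of_mem_Ioo ⟨by linarith [pi_pos], hθ2⟩
  have htether := mul_cos_sub_mul_sin_le_of_le_div_cos_add_mul_tan hcos hhigh
  refine ⟨htether, fun _ => ?_⟩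
  have hR : 0 < √(d ^ 2 + h ^ 2) := sqrt_pos.2 (by positivity)
  have hα_nonneg : 0 ≤ arcsin (d / √(d ^ 2 + h ^ 2)) := arcsin_nonneg.2 (by positivity)
  have hα_le := arcsin_le_pi_div_two (d / √(d ^ 2 + h ^ 2))
  rw [sub_le_comm, le_arcsin_iff_sin_le' ⟨by linarith, by linarith⟩, le_div_iff₀' hR,
    ← mul_cos_sub_mul_sin_eq_sqrt_mul_sin hh]
  exact htether

theorem mid_receiver_bounds
    (d h T θmin : ℝ) (hd : 0 < d) (hh : 0 ≤ h) (hT : 0 < T)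
    (hθ1 : 0 ≤ θmin) (hθ2 : θmin < π/2)
    (hlow : T * Real.cos θmin ≤ d)
    (hhigh : d ≤ T / Real.cos θmin + h * Real.tan θmin) :
    d * Real.cos θmin - h * Real.sin θmin ≤ T ∧
    (T < Real.sqrt (d^2 + h^2) →
      Real.arcsin (d / Real.sqrt (d^2 + h^2))
        - Real.arcsin (T / Real.sqrt (d^2 + h^2)) ≤ θmin) :=
  mid_receiver_bounds_general d h T θmin hd hh hθ1 hθ2 hhigh
end

section
/- For d > 0, h > 0, T > 0 with T < sqrt(d^2 + h^2), let θ* = arcsin(d/sqrt(d^2+h^2)) − arcsin(T/sqrt(d^2+h^2)). Then tan of the elevation angle of the TUAV at (d − T·cos θ*, h + T·sin θ*) from the origin equals (h·sqrt(h^2+d^2−T^2) + dT)/(d·sqrt(h^2+d^2−T^2) − h·T), and the distance from the TUAV to the origin equals sqrt(h^2 + d^2 − T^2). -/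
/-!
Write `S = √(d² + h²)` and `R = √(h² + d² - T²)`, so that `(d, h)` and `(T, R)` are points of
the circle of radius `S` and the two arcsines are angles measured from the vertical. The angle
difference formulas give `sin θ* = (dR - hT)/S²` and `cos θ* = (hR + dT)/S²`, and the TUAV turns
out to be the point `(R/S²)·(dR - hT, hR + dT)`. Since `(dR - hT)² + (hR + dT)² = S²·S²`, this
point lies at distance `R` from the origin, and its slope is `(hR + dT)/(dR - hT)`.
-/

open Real

section ArcsinOnCircle

variable {x y r : ℝ}

lemma sin_arcsin_div_of_sq_add_sq (hr : 0 < r) (hxy : x ^ 2 + y ^ 2 = r ^ 2) :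
    sin (arcsin (x / r)) = x / r := by
  obtain ⟨hlo, hhi⟩ := abs_le_of_sq_le_sq' (by nlinarith [sq_nonneg y] : x ^ 2 ≤ r ^ 2) hr.le
  exact sin_arcsin (by rwa [le_div_iff₀ hr, neg_one_mul]) (by rwa [div_le_one hr])

lemma cos_arcsin_div_of_sq_add_sq (hy : 0 ≤ y) (hr : 0 < r) (hxy : x ^ 2 + y ^ 2 = r ^ 2) :
    cos (arcsin (x / r)) = y / r := by
  have h : 1 - (x / r) ^ 2 = (y / r) ^ 2 := by
    field_simp
    linarith
  rw [cos_arcsin, h, sqrt_sq (div_nonneg hy hr.le)]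

end ArcsinOnCircle

section ArcsinDifference

variable {x₁ y₁ x₂ y₂ r : ℝ}

lemma sin_arcsin_sub_arcsin_of_sq_add_sq (hy₁ : 0 ≤ y₁) (hy₂ : 0 ≤ y₂) (hr : 0 < r)
    (h₁ : x₁ ^ 2 + y₁ ^ 2 = r ^ 2) (h₂ : x₂ ^ 2 + y₂ ^ 2 = r ^ 2) :
    sin (arcsin (x₁ / r) - arcsin (x₂ / r)) = (x₁ * y₂ - y₁ * x₂) / r ^ 2 := by
  rw [sin_sub, sin_arcsin_div_of_sq_add_sq hr h₁, sin_arcsin_div_of_sq_add_sq hr h₂,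
    cos_arcsin_div_of_sq_add_sq hy₁ hr h₁, cos_arcsin_div_of_sq_add_sq hy₂ hr h₂]
  ring

lemma cos_arcsin_sub_arcsin_of_sq_add_sq (hy₁ : 0 ≤ y₁) (hy₂ : 0 ≤ y₂) (hr : 0 < r)
    (h₁ : x₁ ^ 2 + y₁ ^ 2 = r ^ 2) (h₂ : x₂ ^ 2 + y₂ ^ 2 = r ^ 2) :
    cos (arcsin (x₁ / r) - arcsin (x₂ / r)) = (y₁ * y₂ + x₁ * x₂) / r ^ 2 := by
  rw [cos_sub, sin_arcsin_div_of_sq_add_sq hr h₁, sin_arcsin_div_of_sq_add_sq hr h₂,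
    cos_arcsin_div_of_sq_add_sq hy₁ hr h₁, cos_arcsin_div_of_sq_add_sq hy₂ hr h₂]
  ring

end ArcsinDifference

lemma sqrt_mul_sq_add_mul_sq {a b c s : ℝ} (hc : 0 ≤ c) (hs : 0 ≤ s)
    (hab : a ^ 2 + b ^ 2 = s ^ 2) : √((c * a) ^ 2 + (c * b) ^ 2) = c * s := by
  rw [show (c * a) ^ 2 + (c * b) ^ 2 = (c * s) ^ 2 by linear_combination c ^ 2 * hab,
    sqrt_sq (mul_nonneg hc hs)]

section TUAVPosition

variable {d h T R S : ℝ}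

lemma sub_mul_div_eq_of_sq_add_sq (hS : S ≠ 0) (hTR : T ^ 2 + R ^ 2 = S ^ 2) :
    d - T * ((h * R + d * T) / S ^ 2) = R / S ^ 2 * (d * R - h * T) := by
  field_simp
  linear_combination -d * hTR

lemma add_mul_div_eq_of_sq_add_sq (hS : S ≠ 0) (hTR : T ^ 2 + R ^ 2 = S ^ 2) :
    h + T * ((d * R - h * T) / S ^ 2) = R / S ^ 2 * (h * R + d * T) := by
  field_simp
  linear_combination -h * hTR

end TUAVPosition

theorem suboptimal_far_case_formulas_general
    (d h T : ℝ) (hh : 0 < h) (hT : 0 < T)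
    (hTd : T < Real.sqrt (d^2 + h^2)) :
    (h + T * Real.sin (Real.arcsin (d / Real.sqrt (d^2 + h^2))
        - Real.arcsin (T / Real.sqrt (d^2 + h^2)))) /
      (d - T * Real.cos (Real.arcsin (d / Real.sqrt (d^2 + h^2))
        - Real.arcsin (T / Real.sqrt (d^2 + h^2))))
      = (h * Real.sqrt (h^2 + d^2 - T^2) + d * T) /
        (d * Real.sqrt (h^2 + d^2 - T^2) - h * T) ∧
    Real.sqrt ((d - T * Real.cos (Real.arcsin (d / Real.sqrt (d^2 + h^2))
        - Real.arcsin (T / Real.sqrt (d^2 + h^2))))^2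
      + (h + T * Real.sin (Real.arcsin (d / Real.sqrt (d^2 + h^2))
        - Real.arcsin (T / Real.sqrt (d^2 + h^2))))^2)
      = Real.sqrt (h^2 + d^2 - T^2) := by
  set S := √(d ^ 2 + h ^ 2)
  set R := √(h ^ 2 + d ^ 2 - T ^ 2)
  have hS : 0 < S := sqrt_pos.2 (by positivity)
  have hdh : d ^ 2 + h ^ 2 = S ^ 2 := (sq_sqrt (by positivity)).symm
  have hT2 : T ^ 2 < d ^ 2 + h ^ 2 := by nlinarith
  have hR : 0 < R := sqrt_pos.2 (by linarith)
  have hTR : T ^ 2 + R ^ 2 = S ^ 2 := by rw [sq_sqrt (by linarith), ← hdh]; ring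
  have hscale : 0 < R / S ^ 2 := by positivity
  rw [sin_arcsin_sub_arcsin_of_sq_add_sq hh.le hR.le hS hdh hTR,
    cos_arcsin_sub_arcsin_of_sq_add_sq hh.le hR.le hS hdh hTR,
    sub_mul_div_eq_of_sq_add_sq hS.ne' hTR, add_mul_div_eq_of_sq_add_sq hS.ne' hTR]
  refine ⟨mul_div_mul_left _ _ hscale.ne', ?_⟩
  rw [sqrt_mul_sq_add_mul_sq hscale.le (sq_nonneg S)
    (by linear_combination (R ^ 2 + T ^ 2) * hdh + S ^ 2 * hTR),
    div_mul_cancel₀ _ (pow_ne_zero 2 hS.ne')]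

theorem suboptimal_far_case_formulas
    (d h T : ℝ) (hd : 0 < d) (hh : 0 < h) (hT : 0 < T)
    (hTd : T < Real.sqrt (d^2 + h^2))
    (hden : h * T < d * Real.sqrt (h^2 + d^2 - T^2)) :
    (h + T * Real.sin (Real.arcsin (d / Real.sqrt (d^2 + h^2))
        - Real.arcsin (T / Real.sqrt (d^2 + h^2)))) /
      (d - T * Real.cos (Real.arcsin (d / Real.sqrt (d^2 + h^2))
        - Real.arcsin (T / Real.sqrt (d^2 + h^2))))
      = (h * Real.sqrt (h^2 + d^2 - T^2) + d * T) /
        (d * Real.sqrt (h^2 + d^2 - T^2) - h * T) ∧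
    Real.sqrt ((d - T * Real.cos (Real.arcsin (d / Real.sqrt (d^2 + h^2))
        - Real.arcsin (T / Real.sqrt (d^2 + h^2))))^2
      + (h + T * Real.sin (Real.arcsin (d / Real.sqrt (d^2 + h^2))
        - Real.arcsin (T / Real.sqrt (d^2 + h^2))))^2)
      = Real.sqrt (h^2 + d^2 - T^2) :=
  suboptimal_far_case_formulas_general d h T hh hT hTd
end

section
/- Let h_b ≥ 0, T > 0, θ ∈ (0, π/2), β > 0, γ > 0. Then 2πβ ∫_0^{T cos θ} exp(−(h_b + r·tan θ)^2/γ^2) · r dr = (πβγ/tan^2 θ) · [ γ·(exp(−h_b^2/γ^2) − exp(−(h_b + T sin θ)^2/γ^2)) − h_b·(Γ_low(1/2, (h_b + T sin θ)^2/γ^2) − Γ_low(1/2, h_b^2/γ^2)) ], where Γ_low(s, x) = ∫_0^x u^{s−1} e^{−u} du is the lower incomplete Gamma function. -/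
open Real

noncomputable def lowerGamma (s x : ℝ) : ℝ :=
  ∫ u in (0:ℝ)..x, u ^ (s - 1) * Real.exp (-u)

/-!
With `y = (h_b + r tan θ) / γ` the integrand `exp (-y²) r` is an affine combination of
`y exp (-y²)` and `exp (-y²)`. The first has primitive `-exp (-y²) / 2`; the second has primitive
`lowerGamma (1/2) (y²) / 2`, because `d/dy lowerGamma (1/2) (y²) = (y²)^(-1/2) exp (-y²) 2y = 2 exp (-y²)`
for `y > 0`. This gives an explicit antiderivative in `r`, and the identity is the fundamental
theorem of calculus on `[0, T cos θ]`, whose image under `r ↦ h_b + r tan θ` ends at `h_b + T sin θ`.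
-/

open Set MeasureTheory intervalIntegral

lemma intervalIntegrable_rpow_sub_one_mul_exp_neg {s : ℝ} (hs : 0 < s) (a b : ℝ) :
    IntervalIntegrable (fun u : ℝ => u ^ (s - 1) * exp (-u)) volume a b :=
  (intervalIntegrable_rpow' (by linarith)).mul_continuousOn (by fun_prop)

lemma continuous_lowerGamma {s : ℝ} (hs : 0 < s) : Continuous (lowerGamma s) :=
  continuous_primitive (intervalIntegrable_rpow_sub_one_mul_exp_neg hs) 0

lemma hasDerivAt_lowerGamma {s x : ℝ} (hs : 0 < s) (hx : 0 < x) :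
    HasDerivAt (lowerGamma s) (x ^ (s - 1) * exp (-x)) x := by
  have hcont : ContinuousOn (fun u : ℝ => u ^ (s - 1) * exp (-u)) (Ioi 0) := fun u hu =>
    ((continuousAt_rpow_const u _ (Or.inl (ne_of_gt hu))).mul
      (by fun_prop : ContinuousAt (fun u : ℝ => exp (-u)) u)).continuousWithinAt
  exact integral_hasDerivAt_right (intervalIntegrable_rpow_sub_one_mul_exp_neg hs 0 x)
    (hcont.stronglyMeasurableAtFilter isOpen_Ioi x hx) (hcont.continuousAt (Ioi_mem_nhds hx))

lemma hasDerivAt_lowerGamma_half_sq {y : ℝ} (hy : 0 < y) :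
    HasDerivAt (fun y => lowerGamma (1/2) (y ^ 2)) (2 * exp (-y ^ 2)) y := by
  have hsq : ((y ^ 2) ^ ((1:ℝ)/2 - 1)) = y⁻¹ := by
    rw [← rpow_natCast, ← rpow_mul hy.le]; norm_num [rpow_neg_one]
  refine ((hasDerivAt_lowerGamma one_half_pos (by positivity)).comp y
    (hasDerivAt_pow 2 y)).congr_deriv ?_
  rw [hsq]; field_simp; ring

lemma integral_exp_neg_sq_affine_mul_id {a t γ b : ℝ} (ha : 0 ≤ a) (ht : 0 < t) (hγ : 0 < γ)
    (hb : 0 ≤ b) :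
    ∫ r in (0:ℝ)..b, exp (-(a + r * t) ^ 2 / γ ^ 2) * r
      = γ / (2 * t ^ 2) * (γ * (exp (-a ^ 2 / γ ^ 2) - exp (-(a + b * t) ^ 2 / γ ^ 2))
        - a * (lowerGamma (1/2) ((a + b * t) ^ 2 / γ ^ 2) - lowerGamma (1/2) (a ^ 2 / γ ^ 2))) := by
  set G : ℝ → ℝ := fun y => γ * exp (-y ^ 2) + a * lowerGamma (1/2) (y ^ 2)
  set y : ℝ → ℝ := fun r => (a + r * t) / γ
  have hG : ∀ z, 0 < z → HasDerivAt G (2 * (a - γ * z) * exp (-z ^ 2)) z := fun z hz =>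
    (((hasDerivAt_pow 2 z).neg.exp.const_mul γ).add
      ((hasDerivAt_lowerGamma_half_sq hz).const_mul a)).congr_deriv
      (by simp only [Pi.neg_apply]; ring)
  have hy : ∀ r, HasDerivAt y (t / γ) r := fun r =>
    (((hasDerivAt_id r).mul_const t).const_add a).div_const γ |>.congr_deriv (by simp)
  have hF : ∀ r ∈ Ioo 0 b, HasDerivAt (fun r => -(γ / (2 * t ^ 2)) * G (y r))
      (exp (-(a + r * t) ^ 2 / γ ^ 2) * r) r := by
    intro r hr
    have hyr : 0 < y r := by have := hr.1; positivity
    refine (((hG _ hyr).comp r (hy r)).const_mul _).congr_deriv ?_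
    simp only [y, div_pow, neg_div]
    field_simp
    ring
  have hcont : Continuous fun r => -(γ / (2 * t ^ 2)) * G (y r) := by
    have := continuous_lowerGamma one_half_pos
    fun_prop
  rw [integral_eq_sub_of_hasDerivAt_of_le hb hcont.continuousOn hF
    (Continuous.intervalIntegrable (by fun_prop) 0 b)]
  simp only [G, y, div_pow, neg_div]
  ring_nf

theorem tuav_integral_identity_general
    (hb T θ β γ : ℝ) (hhb : 0 ≤ hb) (hT : 0 < T)
    (hθ : θ ∈ Set.Ioo 0 (π/2)) (hγ : 0 < γ) :
    2 * π * β * ∫ r in (0:ℝ)..(T * Real.cos θ),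
        Real.exp (-(hb + r * Real.tan θ)^2 / γ^2) * r
    = (π * β * γ / (Real.tan θ)^2) *
      (γ * (Real.exp (-hb^2 / γ^2) - Real.exp (-(hb + T * Real.sin θ)^2 / γ^2))
        - hb * (lowerGamma (1/2) ((hb + T * Real.sin θ)^2 / γ^2)
                - lowerGamma (1/2) (hb^2 / γ^2))) := by
  obtain ⟨hθ₀, hθ₁⟩ := hθ
  have htan : 0 < tan θ := tan_pos_of_pos_of_lt_pi_div_two hθ₀ hθ₁
  have hcos : 0 < cos θ := cos_pos_of_mem_Ioo ⟨by linarith [pi_pos], hθ₁⟩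
  have hend : T * cos θ * tan θ = T * sin θ := by
    rw [tan_eq_sin_div_cos]; field_simp
  rw [integral_exp_neg_sq_affine_mul_id hhb htan hγ (by positivity), hend]
  field_simp

theorem tuav_integral_identity
    (hb T θ β γ : ℝ) (hhb : 0 ≤ hb) (hT : 0 < T)
    (hθ : θ ∈ Set.Ioo 0 (π/2)) (hβ : 0 < β) (hγ : 0 < γ) :
    2 * π * β * ∫ r in (0:ℝ)..(T * Real.cos θ),
        Real.exp (-(hb + r * Real.tan θ)^2 / γ^2) * r
    = (π * β * γ / (Real.tan θ)^2) *
      (γ * (Real.exp (-hb^2 / γ^2) - Real.exp (-(hb + T * Real.sin θ)^2 / γ^2))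
        - hb * (lowerGamma (1/2) ((hb + T * Real.sin θ)^2 / γ^2)
                - lowerGamma (1/2) (hb^2 / γ^2))) :=
  tuav_integral_identity_general hb T θ β γ hhb hT hθ hγ
end
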